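/- Let P(d) be the set of sequences ((a₁,u₁),…,(a_d,u_d)) in ({E,N}×ℕ)^d satisfying: (L1) a₁ = E and u₁ = 1; (L2) if a_i = a_{i+1} then u_i ≥ u_{i+1}; (L3) if a_i ≠ a_{i+1} then u_i + u_{i+1} ≤ i+1. Then |P(d)| = d!. -/

import Mathlib

/-- A labeled northeast path of length `d`: each step is a direction
(`true` = E, `false` = N) together with a positive integer label, subject to:
(L1) the first step is `(E,1)`;
(L2) equal consecutive directions have weakly decreasing labels;
(L3) for differing consecutive directions at (1-based) positions `i, i+1`,
the two labels sum to at most `i+1`. -/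
def IsLabeledPath {d : ℕ} (s : Fin d → Bool × ℕ) : Prop :=
  (∀ i : Fin d, 1 ≤ (s i).2) ∧
  (∀ h : 0 < d, (s ⟨0, h⟩).1 = true ∧ (s ⟨0, h⟩).2 = 1) ∧
  (∀ (i : ℕ) (h : i + 1 < d),
    ((s ⟨i, by omega⟩).1 = (s ⟨i + 1, h⟩).1 →
      (s ⟨i + 1, h⟩).2 ≤ (s ⟨i, by omega⟩).2) ∧
    ((s ⟨i, by omega⟩).1 ≠ (s ⟨i + 1, h⟩).1 →
      (s ⟨i, by omega⟩).2 + (s ⟨i + 1, h⟩).2 ≤ i + 2))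

/-! Deleting the last step maps a path of length `n + 2` to a path of length `n + 1` together
with an admissible last step. If that path ends in `(a, u)`, then `u ≤ n + 1`, and the admissible
steps are `(a, v)` with `1 ≤ v ≤ u` and `(!a, v)` with `1 ≤ v ≤ n + 2 - u`: exactly `n + 2` of
them, whatever `(a, u)` is. Hence `|P(n + 2)| = (n + 2) |P(n + 1)|`, and `P(1) = {(E, 1)}`. -/

/-- `x` may follow `p` when `p` is the step at (0-based) position `i`. -/
def IsLabeledStep (i : ℕ) (p x : Bool × ℕ) : Prop :=
  1 ≤ x.2 ∧ (p.1 = x.1 → x.2 ≤ p.2) ∧ (p.1 ≠ x.1 → p.2 + x.2 ≤ i + 2)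

theorem isLabeledPath_snoc {n : ℕ} (t : Fin (n + 1) → Bool × ℕ) (x : Bool × ℕ) :
    IsLabeledPath (Fin.snoc t x : Fin (n + 2) → Bool × ℕ) ↔
      IsLabeledPath t ∧ IsLabeledStep n (t (Fin.last n)) x := by
  have hlt : ∀ i (h : i < n + 1),
      (Fin.snoc t x : Fin (n + 2) → Bool × ℕ) ⟨i, by omega⟩ = t ⟨i, h⟩ :=
    fun i h => Fin.snoc_castSucc (α := fun _ => Bool × ℕ) x t ⟨i, h⟩
  have hlast : (Fin.snoc t x : Fin (n + 2) → Bool × ℕ) ⟨n + 1, by omega⟩ = x :=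
    Fin.snoc_last (α := fun _ => Bool × ℕ) x t
  constructor
  · rintro ⟨hpos, hfirst, hstep⟩
    refine ⟨⟨fun i => ?_, fun h => ?_, fun i hi => ?_⟩, ?_, ?_⟩
    · simpa [hlt] using hpos i.castSucc
    · simpa [hlt] using hfirst (by omega)
    · simpa [hlt i (by omega), hlt (i + 1) hi] using hstep i (by omega)
    · simpa [hlast] using hpos (Fin.last _)
    · simpa [hlt, hlast, Fin.last] using hstep n (by omega)
  · rintro ⟨⟨hpos, hfirst, hstep⟩, hx⟩
    refine ⟨fun i => ?_, fun h => ?_, fun i hi => ?_⟩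
    · induction i using Fin.lastCases with
      | last => simpa using hx.1
      | cast i => simpa using hpos i
    · simpa [hlt] using hfirst (by omega)
    · rw [hlt i (by omega)]
      obtain hi | rfl : i + 1 < n + 1 ∨ i = n := by omega
      · rw [hlt (i + 1) hi]
        exact hstep i hi
      · rw [hlast]
        exact hx.2

theorem IsLabeledPath.label_le {d : ℕ} {s : Fin d → Bool × ℕ} (hs : IsLabeledPath s)
    (i : Fin d) : (s i).2 ≤ i + 1 := by
  obtain ⟨i, hi⟩ := i
  induction i with
  | zero => exact (hs.2.1 hi).2.le
  | succ i ih =>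
    have := hs.1 ⟨i, by omega⟩
    have := ih (by omega)
    have := hs.2.2 i hi
    grind

theorem card_isLabeledStep (i : ℕ) {p : Bool × ℕ} (hp : p.2 ≤ i + 2) :
    Nat.card {x // IsLabeledStep i p x} = i + 2 := by
  obtain ⟨a, u⟩ := p
  have hsteps : {x | IsLabeledStep i (a, u) x} =
      ↑(({a} ×ˢ Finset.Icc 1 u ∪ {!a} ×ˢ Finset.Icc 1 (i + 2 - u) : Finset (Bool × ℕ))) := by
    ext ⟨b, v⟩
    cases a <;> cases b <;> simp [IsLabeledStep] <;> omega
  have hdisj : Disjoint ({a} ×ˢ Finset.Icc 1 u) ({!a} ×ˢ Finset.Icc 1 (i + 2 - u)) := by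
    cases a <;> simp [Finset.disjoint_left]
  rw [← Set.coe_ofPred, hsteps, Nat.card_coe_set_eq, Set.ncard_coe_finset,
    Finset.card_union_of_disjoint hdisj]
  simp only [Finset.card_product, Finset.card_singleton, Nat.card_Icc]
  omega

theorem Nat.card_sigma_of_card_eq {α : Type*} {β : α → Type*} {k : ℕ} (hk : k ≠ 0)
    (h : ∀ a, Nat.card (β a) = k) : Nat.card (Σ a, β a) = Nat.card α * k := by
  have (a : α) : Finite (β a) := Nat.finite_of_card_ne_zero (h a ▸ hk)
  rw [Nat.card_congr ((Equiv.sigmaCongrRight fun a => Finite.equivFinOfCardEq (h a)).trans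
    (Equiv.sigmaEquivProd α (Fin k))), Nat.card_prod, Nat.card_fin]

theorem card_labeledPaths_one :
    Nat.card {s : Fin 1 → Bool × ℕ // IsLabeledPath s} = 1 := by
  have hfirst (s : {s : Fin 1 → Bool × ℕ // IsLabeledPath s}) : s.1 0 = (true, 1) :=
    Prod.ext (s.2.2.1 one_pos).1 (s.2.2.1 one_pos).2
  rw [Nat.card_eq_one_iff_unique]
  refine ⟨⟨fun s s' => Subtype.ext (funext fun i => ?_)⟩, ⟨⟨fun _ => (true, 1), ?_⟩⟩⟩
  · rw [Fin.fin_one_eq_zero i, hfirst s, hfirst s']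
  · exact ⟨fun _ => le_rfl, fun _ => ⟨rfl, rfl⟩, fun i hi => by omega⟩

def labeledPathSnocEquiv (n : ℕ) :
    {s : Fin (n + 2) → Bool × ℕ // IsLabeledPath s} ≃
      Σ t : {t : Fin (n + 1) → Bool × ℕ // IsLabeledPath t},
        {x // IsLabeledStep n (t.1 (Fin.last n)) x} where
  toFun s :=
    have h := (isLabeledPath_snoc (Fin.init s.1) (s.1 (Fin.last _))).1 (by simpa using s.2)
    ⟨⟨Fin.init s.1, h.1⟩, ⟨s.1 (Fin.last _), h.2⟩⟩
  invFun p := ⟨Fin.snoc p.1.1 p.2.1, (isLabeledPath_snoc _ _).2 ⟨p.1.2, p.2.2⟩⟩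
  left_inv s := by simp
  right_inv p := Sigma.subtype_ext (Subtype.ext (by simp)) (by simp)

theorem card_labeledPaths_succ (n : ℕ) :
    Nat.card {s : Fin (n + 2) → Bool × ℕ // IsLabeledPath s} =
      Nat.card {t : Fin (n + 1) → Bool × ℕ // IsLabeledPath t} * (n + 2) := by
  rw [Nat.card_congr (labeledPathSnocEquiv n)]
  exact Nat.card_sigma_of_card_eq (by omega) fun t =>
    card_isLabeledStep n ((t.2.label_le (Fin.last n)).trans (by simp))

theorem card_labeledPaths (d : ℕ) (hd : 1 ≤ d) :
    Nat.card {s : Fin d → Bool × ℕ // IsLabeledPath s} = d.factorial := by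
  induction d, hd using Nat.le_induction with
  | base => exact card_labeledPaths_one
  | succ n hn ih =>
    obtain ⟨m, rfl⟩ := Nat.exists_eq_add_of_le' hn
    rw [card_labeledPaths_succ, ih, Nat.factorial_succ (m + 1), mul_comm]
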